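/- arXiv:1611.04208 — 2 statements merged into one kernel-verified Lean document; each statement's English description precedes it below -/
import Mathlib

section
/- Let B̃ = (I − P₂)B(I − P₂) where P₂ is the within-group averaging projection and B ∈ ℝ^{n×n} is symmetric positive semidefinite with spectral norm ‖B‖₂ ≤ ‖B‖₁ (matrix ℓ₁ norm). Then the entrywise bias satisfies ‖B̃ − B‖_max ≤ 3‖B‖₁ / min(n₁, n₂). -/
open Matrix
open scoped Matrix.Norms.L2Operator

/-- The within-group averaging projection: block diagonal with blocks
`(1/n₁)·1_{n₁}1_{n₁}ᵀ` and `(1/n₂)·1_{n₂}1_{n₂}ᵀ`. -/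
noncomputable def groupProj (n₁ n₂ : ℕ) : Matrix (Fin (n₁ + n₂)) (Fin (n₁ + n₂)) ℝ :=
  Matrix.of fun i j =>
    if (i : ℕ) < n₁ then (if (j : ℕ) < n₁ then (n₁ : ℝ)⁻¹ else 0)
    else (if (j : ℕ) < n₁ then 0 else (n₂ : ℝ)⁻¹)

/-- The maximum absolute entry of a matrix. -/
noncomputable def maxNorm {n : ℕ} (M : Matrix (Fin n) (Fin n) ℝ) : ℝ :=
  ⨆ i, ⨆ j, |M i j|

/-- The matrix ℓ₁ norm: maximum absolute column sum. -/
noncomputable def l1Norm {n : ℕ} (M : Matrix (Fin n) (Fin n) ℝ) : ℝ :=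
  ⨆ j, ∑ i, |M i j|

/-- Entrywise bias of group centering: for symmetric positive semidefinite `B`
with `‖B‖₂ ≤ ‖B‖₁`, the matrix `B̃ = (I − P₂)B(I − P₂)` satisfies
`‖B̃ − B‖_max ≤ 3‖B‖₁ / min(n₁, n₂)`. -/
theorem groupCentering_bias_bound (n₁ n₂ : ℕ) (h₁ : 1 ≤ n₁) (h₂ : 1 ≤ n₂)
    (B : Matrix (Fin (n₁ + n₂)) (Fin (n₁ + n₂)) ℝ) (hB : B.PosSemidef)
    (hnorm : ‖B‖ ≤ l1Norm B) :
    maxNorm ((1 - groupProj n₁ n₂) * B * (1 - groupProj n₁ n₂) - B) ≤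
      3 * l1Norm B / (min n₁ n₂ : ℝ) := by
  have hne : Nonempty (Fin (n₁ + n₂)) := ⟨⟨0, by omega⟩⟩
  set P := groupProj n₁ n₂ with hPdef
  set c := l1Norm B with hcdef
  set m : ℝ := (min n₁ n₂ : ℝ) with hmdef
  have hm0 : (0:ℝ) < m := by
    have : (1:ℝ) ≤ m := by
      rw [hmdef]; push_cast [Nat.cast_min]
      exact le_min (by exact_mod_cast h₁) (by exact_mod_cast h₂)
    linarith
  have hmn₁ : m ≤ (n₁ : ℝ) := by
    rw [hmdef]; push_cast [Nat.cast_min]; exact min_le_left _ _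
  have hmn₂ : m ≤ (n₂ : ℝ) := by
    rw [hmdef]; push_cast [Nat.cast_min]; exact min_le_right _ _
  have hcol : ∀ j, ∑ i, |B i j| ≤ c := by
    intro j
    rw [hcdef, l1Norm]
    exact le_ciSup (f := fun j => ∑ i, |B i j|) (Set.Finite.bddAbove (Set.finite_range _)) j
  have hc0 : (0:ℝ) ≤ c := by
    refine le_trans ?_ (hcol (Classical.arbitrary _))
    exact Finset.sum_nonneg fun i _ => abs_nonneg _
  have hsym : ∀ i j, B i j = B j i := by
    intro i j
    have := hB.1.apply i j
    simpa using this.symm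
  have hPbound : ∀ i k, |P i k| ≤ m⁻¹ := by
    intro i k
    have h1' : (n₁:ℝ)⁻¹ ≤ m⁻¹ := by
      apply inv_anti₀ hm0 hmn₁
    have h2' : (n₂:ℝ)⁻¹ ≤ m⁻¹ := by
      apply inv_anti₀ hm0 hmn₂
    have hmi : (0:ℝ) ≤ m⁻¹ := by positivity
    have hn₁0 : (0:ℝ) ≤ (n₁:ℝ)⁻¹ := by positivity
    have hn₂0 : (0:ℝ) ≤ (n₂:ℝ)⁻¹ := by positivity
    simp only [hPdef, groupProj, Matrix.of_apply]
    split_ifs <;> simp [abs_of_nonneg, hn₁0, hn₂0, hmi, h1', h2']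
  have hProw : ∀ i, ∑ k, |P i k| = 1 := by
    intro i
    simp only [hPdef, groupProj, Matrix.of_apply]
    by_cases hi : (i:ℕ) < n₁
    · simp only [hi, if_true]
      rw [Fin.sum_univ_add]
      simp only [Fin.coe_castAdd, Fin.is_lt, if_true, Fin.coe_natAdd]
      have hz : ∀ k : Fin n₂, |if n₁ + (k:ℕ) < n₁ then (n₁:ℝ)⁻¹ else 0| = 0 := by
        intro k; rw [if_neg (by omega)]; simp
      simp only [hz, Finset.sum_const_zero, add_zero, Finset.sum_const, Finset.card_univ,
        Fintype.card_fin, nsmul_eq_mul, abs_of_nonneg (by positivity : (0:ℝ) ≤ (n₁:ℝ)⁻¹)]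
      field_simp
    · simp only [hi, if_false]
      rw [Fin.sum_univ_add]
      simp only [Fin.coe_castAdd, Fin.is_lt, if_true, Fin.coe_natAdd]
      have hz : ∀ k : Fin n₂, |if n₁ + (k:ℕ) < n₁ then (0:ℝ) else (n₂:ℝ)⁻¹| = (n₂:ℝ)⁻¹ := by
        intro k; rw [if_neg (by omega)]; exact abs_of_nonneg (by positivity)
      simp only [hz, abs_zero, Finset.sum_const_zero, zero_add, Finset.sum_const,
        Finset.card_univ, Fintype.card_fin, nsmul_eq_mul]
      field_simp
  -- bound on P * B entries
  have hPB : ∀ i j, |(P * B) i j| ≤ c / m := by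
    intro i j
    rw [Matrix.mul_apply]
    calc |∑ k, P i k * B k j| ≤ ∑ k, |P i k * B k j| := Finset.abs_sum_le_sum_abs _ _
      _ ≤ ∑ k, m⁻¹ * |B k j| := by
          refine Finset.sum_le_sum fun k _ => ?_
          rw [abs_mul]
          exact mul_le_mul_of_nonneg_right (hPbound i k) (abs_nonneg _)
      _ = m⁻¹ * ∑ k, |B k j| := by rw [Finset.mul_sum]
      _ ≤ m⁻¹ * c := by
          exact mul_le_mul_of_nonneg_left (hcol j) (by positivity)
      _ = c / m := by rw [div_eq_mul_inv, mul_comm]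
  -- bound on B * P entries
  have hBP : ∀ i j, |(B * P) i j| ≤ c / m := by
    intro i j
    rw [Matrix.mul_apply]
    calc |∑ k, B i k * P k j| ≤ ∑ k, |B i k * P k j| := Finset.abs_sum_le_sum_abs _ _
      _ ≤ ∑ k, |B k i| * m⁻¹ := by
          refine Finset.sum_le_sum fun k _ => ?_
          rw [abs_mul, hsym i k]
          exact mul_le_mul_of_nonneg_left (hPbound k j) (abs_nonneg _)
      _ = (∑ k, |B k i|) * m⁻¹ := by rw [Finset.sum_mul]
      _ ≤ c * m⁻¹ := mul_le_mul_of_nonneg_right (hcol i) (by positivity)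
      _ = c / m := by rw [div_eq_mul_inv]
  -- bound on P * (B * P) entries
  have hPBP : ∀ i j, |(P * (B * P)) i j| ≤ c / m := by
    intro i j
    rw [Matrix.mul_apply]
    calc |∑ k, P i k * (B * P) k j| ≤ ∑ k, |P i k * (B * P) k j| :=
          Finset.abs_sum_le_sum_abs _ _
      _ ≤ ∑ k, |P i k| * (c / m) := by
          refine Finset.sum_le_sum fun k _ => ?_
          rw [abs_mul]
          exact mul_le_mul_of_nonneg_left (hBP k j) (abs_nonneg _)
      _ = (∑ k, |P i k|) * (c / m) := by rw [Finset.sum_mul]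
      _ = c / m := by rw [hProw i, one_mul]
  have hexp : (1 - P) * B * (1 - P) - B = P * (B * P) - P * B - B * P := by
    noncomm_ring
  rw [maxNorm, hexp]
  refine ciSup_le fun i => ciSup_le fun j => ?_
  have h1 := hPBP i j
  have h2 := hPB i j
  have h3 := hBP i j
  have habs : |(P * (B * P) - P * B - B * P) i j| ≤
      |(P * (B * P)) i j| + |(P * B) i j| + |(B * P) i j| := by
    simp only [Matrix.sub_apply]
    calc |(P * (B * P)) i j - (P * B) i j - (B * P) i j|
        ≤ |(P * (B * P)) i j - (P * B) i j| + |(B * P) i j| := abs_sub _ _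
      _ ≤ |(P * (B * P)) i j| + |(P * B) i j| + |(B * P) i j| := by
          have := abs_sub ((P * (B * P)) i j) ((P * B) i j)
          linarith
  have hfin : c / m + c / m + c / m = 3 * c / m := by ring
  calc |(P * (B * P) - P * B - B * P) i j|
      ≤ |(P * (B * P)) i j| + |(P * B) i j| + |(B * P) i j| := habs
    _ ≤ c / m + c / m + c / m := by linarith
    _ = 3 * c / m := hfin
end

section
/- Let B be a symmetric positive definite n×n matrix, D ∈ ℝ^{n×k} full column rank, and B̂ symmetric positive definite with Δ = B̂⁻¹ − B⁻¹. Let Ω = (DᵀB⁻¹D)⁻¹ and Ω̂ = (DᵀB̂⁻¹D)⁻¹. If ‖B‖₂·‖Δ‖₂·κ(D)² < 1, where κ(D) = σ_max(D)/σ_min(D), then ‖Ω̂ − Ω‖₂ ≤ (1/σ_min(D)²)·‖B‖₂²·‖Δ‖₂ / (1/κ(D)² − ‖B‖₂·‖Δ‖₂). -/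
open Matrix
open scoped Matrix.Norms.L2Operator

/-- The smallest singular value of `D`: the square root of the smallest
eigenvalue of `Dᴴ * D`. -/
noncomputable def sigmaMin {n k : ℕ} (D : Matrix (Fin n) (Fin k) ℝ) : ℝ :=
  Real.sqrt (⨅ i, (Matrix.isHermitian_conjTranspose_mul_self D).eigenvalues i)

/-- The largest singular value of `D`: the square root of the largest
eigenvalue of `Dᴴ * D`. -/
noncomputable def sigmaMax {n k : ℕ} (D : Matrix (Fin n) (Fin k) ℝ) : ℝ :=
  Real.sqrt (⨆ i, (Matrix.isHermitian_conjTranspose_mul_self D).eigenvalues i)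

namespace OmegaAux

noncomputable def euc {m : ℕ} (v : Fin m → ℝ) : EuclideanSpace ℝ (Fin m) :=
  (EuclideanSpace.equiv (Fin m) ℝ).symm v

lemma inner_euc {m : ℕ} (v w : Fin m → ℝ) : (inner ℝ (euc v) (euc w) : ℝ) = v ⬝ᵥ w := by
  simp [euc, PiLp.inner_apply, dotProduct, mul_comm]

lemma norm_euc_sq {m : ℕ} (v : Fin m → ℝ) : ‖euc v‖ ^ 2 = v ⬝ᵥ v := by
  rw [← real_inner_self_eq_norm_sq, inner_euc]

lemma dot_le_norm_mul {m : ℕ} (v w : Fin m → ℝ) : v ⬝ᵥ w ≤ ‖euc v‖ * ‖euc w‖ := by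
  rw [← inner_euc]; exact real_inner_le_norm _ _

lemma norm_euc_mulVec {p q : ℕ} (A : Matrix (Fin p) (Fin q) ℝ) (v : Fin q → ℝ) :
    ‖euc (A *ᵥ v)‖ ≤ ‖A‖ * ‖euc v‖ :=
  A.l2_opNorm_mulVec (euc v)

lemma opNorm_le {p q : ℕ} (A : Matrix (Fin p) (Fin q) ℝ) {C : ℝ} (hC : 0 ≤ C)
    (h : ∀ v : Fin q → ℝ, ‖euc (A *ᵥ v)‖ ≤ C * ‖euc v‖) : ‖A‖ ≤ C := by
  rw [Matrix.l2_opNorm_def]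
  exact ContinuousLinearMap.opNorm_le_bound _ hC fun x => h x

lemma dot_self_nonneg {m : ℕ} (v : Fin m → ℝ) : 0 ≤ v ⬝ᵥ v := by
  rw [← norm_euc_sq]; positivity

lemma dot_self_pos {m : ℕ} {v : Fin m → ℝ} (hv : v ≠ 0) : 0 < v ⬝ᵥ v :=
  lt_of_le_of_ne (dot_self_nonneg v) (fun h => hv (dotProduct_self_eq_zero.mp h.symm))

lemma rayleigh {m : ℕ} {A : Matrix (Fin m) (Fin m) ℝ} (hA : A.IsHermitian) (x : Fin m → ℝ) :
    (⨅ i, hA.eigenvalues i) * (x ⬝ᵥ x) ≤ x ⬝ᵥ (A *ᵥ x) ∧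
      x ⬝ᵥ (A *ᵥ x) ≤ (⨆ i, hA.eigenvalues i) * (x ⬝ᵥ x) := by
  classical
  set U : Matrix (Fin m) (Fin m) ℝ := (hA.eigenvectorUnitary : Matrix (Fin m) (Fin m) ℝ) with hUdef
  have hsU : star U = Uᵀ := by
    ext i j; simp [Matrix.star_apply]
  have hUU : U * Uᵀ = 1 := by
    rw [← hsU]; exact Matrix.mem_unitaryGroup_iff.mp hA.eigenvectorUnitary.2
  set y : Fin m → ℝ := Uᵀ *ᵥ x with hy
  have hxy : ∀ z : Fin m → ℝ, x ⬝ᵥ (U *ᵥ z) = y ⬝ᵥ z := by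
    intro z
    rw [Matrix.dotProduct_mulVec, hy, Matrix.mulVec_transpose]
  have h1 : x ⬝ᵥ x = y ⬝ᵥ y := by
    calc x ⬝ᵥ x = x ⬝ᵥ ((U * Uᵀ) *ᵥ x) := by rw [hUU, Matrix.one_mulVec]
      _ = x ⬝ᵥ (U *ᵥ (Uᵀ *ᵥ x)) := by rw [Matrix.mulVec_mulVec]
      _ = y ⬝ᵥ y := hxy _
  have h2 : x ⬝ᵥ (A *ᵥ x) = ∑ i, hA.eigenvalues i * (y i)^2 := by
    conv_lhs => rw [hA.spectral_theorem]
    rw [Unitary.conjStarAlgAut_apply, ← hUdef, hsU]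
    rw [← Matrix.mulVec_mulVec, ← Matrix.mulVec_mulVec, hxy]
    simp only [dotProduct, Matrix.mulVec_diagonal]
    apply Finset.sum_congr rfl
    intro i _
    simp [hy]; ring
  have hsum : y ⬝ᵥ y = ∑ i, (y i)^2 := by
    simp [dotProduct, sq]
  constructor
  · rw [h2, h1, hsum, Finset.mul_sum]
    apply Finset.sum_le_sum
    intro i _
    exact mul_le_mul_of_nonneg_right
      (ciInf_le (Set.Finite.bddBelow (Set.finite_range _)) i) (sq_nonneg _)
  · rw [h2, h1, hsum, Finset.mul_sum]
    apply Finset.sum_le_sum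
    intro i _
    exact mul_le_mul_of_nonneg_right
      (le_ciSup (Set.Finite.bddAbove (Set.finite_range _)) i) (sq_nonneg _)

end OmegaAux

namespace OmegaAux

lemma cs_posdef {n : ℕ} {B : Matrix (Fin n) (Fin n) ℝ} (hB : B.PosDef) (u v : Fin n → ℝ) :
    (u ⬝ᵥ (B *ᵥ v)) * (u ⬝ᵥ (B *ᵥ v)) ≤ (u ⬝ᵥ (B *ᵥ u)) * (v ⬝ᵥ (B *ᵥ v)) := by
  letI ng := B.toSeminormedAddCommGroup hB.posSemidef
  letI ip := B.toInnerProductSpace hB.posSemidef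
  have h := @real_inner_mul_inner_self_le (Fin n → ℝ) ng ip u v
  change ((B *ᵥ v) ⬝ᵥ star u) * ((B *ᵥ v) ⬝ᵥ star u) ≤
    ((B *ᵥ u) ⬝ᵥ star u) * ((B *ᵥ v) ⬝ᵥ star v) at h
  simp only [star_trivial] at h
  rwa [dotProduct_comm (B *ᵥ v) u, dotProduct_comm (B *ᵥ u) u,
    dotProduct_comm (B *ᵥ v) v] at h

lemma inv_coercive {n : ℕ} {B : Matrix (Fin n) (Fin n) ℝ} (hB : B.PosDef) (y : Fin n → ℝ) :
    y ⬝ᵥ y ≤ ‖B‖ * (y ⬝ᵥ (B⁻¹ *ᵥ y)) := by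
  have hBdet : IsUnit B.det := isUnit_iff_ne_zero.mpr hB.det_pos.ne'
  have hBB : B *ᵥ (B⁻¹ *ᵥ y) = y := by
    rw [Matrix.mulVec_mulVec, Matrix.mul_nonsing_inv _ hBdet, Matrix.one_mulVec]
  set v := B⁻¹ *ᵥ y with hv
  have h1 : (y ⬝ᵥ y) * (y ⬝ᵥ y) ≤ (y ⬝ᵥ (B *ᵥ y)) * (y ⬝ᵥ v) := by
    have h := cs_posdef hB y v
    rw [hBB, dotProduct_comm v y] at h
    exact h
  have h2 : y ⬝ᵥ (B *ᵥ y) ≤ ‖B‖ * (y ⬝ᵥ y) := by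
    calc y ⬝ᵥ (B *ᵥ y) ≤ ‖euc y‖ * ‖euc (B *ᵥ y)‖ := dot_le_norm_mul _ _
      _ ≤ ‖euc y‖ * (‖B‖ * ‖euc y‖) :=
        mul_le_mul_of_nonneg_left (norm_euc_mulVec B y) (norm_nonneg _)
      _ = ‖B‖ * (y ⬝ᵥ y) := by rw [show ‖euc y‖ * (‖B‖ * ‖euc y‖) = ‖B‖ * ‖euc y‖^2 by ring,
            norm_euc_sq]
  have hv0 : 0 ≤ y ⬝ᵥ v := by
    have := hB.inv.posSemidef.dotProduct_mulVec_nonneg y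
    simpa using this
  rcases eq_or_lt_of_le (dot_self_nonneg y) with h0 | h0
  · rw [← h0]; exact mul_nonneg (norm_nonneg _) hv0
  · have h3 : (y ⬝ᵥ y) * (y ⬝ᵥ y) ≤ (‖B‖ * (y ⬝ᵥ v)) * (y ⬝ᵥ y) := by
      calc (y ⬝ᵥ y) * (y ⬝ᵥ y) ≤ (y ⬝ᵥ (B *ᵥ y)) * (y ⬝ᵥ v) := h1
        _ ≤ (‖B‖ * (y ⬝ᵥ y)) * (y ⬝ᵥ v) := mul_le_mul_of_nonneg_right h2 hv0
        _ = (‖B‖ * (y ⬝ᵥ v)) * (y ⬝ᵥ y) := by ring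
    exact le_of_mul_le_mul_right h3 h0

lemma dot_conj {n k : ℕ} (D : Matrix (Fin n) (Fin k) ℝ) (S : Matrix (Fin n) (Fin n) ℝ)
    (v : Fin k → ℝ) :
    v ⬝ᵥ ((Dᴴ * S * D) *ᵥ v) = (D *ᵥ v) ⬝ᵥ (S *ᵥ (D *ᵥ v)) := by
  have hDt : Dᴴ = Dᵀ := by ext i j; simp [Matrix.conjTranspose_apply]
  rw [Matrix.mul_assoc, hDt, ← Matrix.mulVec_mulVec, Matrix.dotProduct_mulVec,
    Matrix.vecMul_transpose, Matrix.mulVec_mulVec]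

lemma dot_DtD {n k : ℕ} (D : Matrix (Fin n) (Fin k) ℝ) (v : Fin k → ℝ) :
    v ⬝ᵥ ((Dᴴ * D) *ᵥ v) = (D *ᵥ v) ⬝ᵥ (D *ᵥ v) := by
  have hDt : Dᴴ = Dᵀ := by ext i j; simp [Matrix.conjTranspose_apply]
  rw [hDt, ← Matrix.mulVec_mulVec, Matrix.dotProduct_mulVec, Matrix.vecMul_transpose]

lemma conj_posDef {n k : ℕ} {B : Matrix (Fin n) (Fin n) ℝ} (hB : B.PosDef)
    {D : Matrix (Fin n) (Fin k) ℝ} (hDinj : ∀ x : Fin k → ℝ, x ≠ 0 → D *ᵥ x ≠ 0) :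
    (Dᴴ * B⁻¹ * D).PosDef := by
  refine Matrix.PosDef.of_dotProduct_mulVec_pos ?_ ?_
  · have hBinv : B⁻¹.IsHermitian := hB.inv.isHermitian
    rw [Matrix.IsHermitian, Matrix.conjTranspose_mul, Matrix.conjTranspose_mul,
      Matrix.conjTranspose_conjTranspose, hBinv.eq, Matrix.mul_assoc]
  · intro x hx
    have key : x ⬝ᵥ ((Dᴴ * B⁻¹ * D) *ᵥ x) = (D *ᵥ x) ⬝ᵥ (B⁻¹ *ᵥ (D *ᵥ x)) := dot_conj D B⁻¹ x
    have hpos := hB.inv.dotProduct_mulVec_pos (hDinj x hx)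
    rw [show star x = x from by ext i; simp, key]
    simpa using hpos

lemma inv_norm_le {m : ℕ} {M : Matrix (Fin m) (Fin m) ℝ} (hM : M.PosDef) {c : ℝ} (hc : 0 < c)
    (hcoer : ∀ x : Fin m → ℝ, c * (x ⬝ᵥ x) ≤ x ⬝ᵥ (M *ᵥ x)) : ‖M⁻¹‖ ≤ 1 / c := by
  apply opNorm_le _ (by positivity)
  intro v
  set x := M⁻¹ *ᵥ v with hx
  have hMx : M *ᵥ x = v := by
    rw [hx, Matrix.mulVec_mulVec, Matrix.mul_nonsing_inv _ (isUnit_iff_ne_zero.mpr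
      hM.det_pos.ne'), Matrix.one_mulVec]
  have h1 : c * ‖euc x‖^2 ≤ ‖euc x‖ * ‖euc v‖ := by
    rw [norm_euc_sq]
    calc c * (x ⬝ᵥ x) ≤ x ⬝ᵥ (M *ᵥ x) := hcoer x
      _ = x ⬝ᵥ v := by rw [hMx]
      _ ≤ ‖euc x‖ * ‖euc v‖ := dot_le_norm_mul _ _
  rcases eq_or_lt_of_le (norm_nonneg (euc x)) with h0 | h0
  · rw [← h0]; positivity
  · have h2 : c * ‖euc x‖ ≤ ‖euc v‖ := by
      have h3 : (c * ‖euc x‖) * ‖euc x‖ ≤ ‖euc v‖ * ‖euc x‖ := by nlinarith [h1]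
      exact le_of_mul_le_mul_right h3 h0
    rw [div_mul_eq_mul_div, le_div_iff₀ hc]
    nlinarith [h2]

end OmegaAux

namespace OmegaAux
lemma real_algebra (σm σM nB δ : ℝ) (hm : σm ≠ 0) (hM : σM ≠ 0)
    (hd1 : 1/(σM/σm)^2 - nB*δ ≠ 0) (hd2 : 1 - nB*δ*(σM/σm)^2 ≠ 0) :
    (1/σm^2)*(nB^2*δ)/(1/(σM/σm)^2 - nB*δ) =
      (nB/σm^2)^2*(σM^2*δ)/(1 - nB*δ*(σM/σm)^2) := by
  rw [div_eq_div_iff hd1 hd2]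
  field_simp
end OmegaAux

set_option maxHeartbeats 1000000 in
/-- Perturbation bound for `Ω = (DᵀB⁻¹D)⁻¹`: if `Δ = B̂⁻¹ − B⁻¹` satisfies
`‖B‖₂·‖Δ‖₂·κ(D)² < 1` with `κ(D) = σ_max(D)/σ_min(D)`, then
`‖Ω̂ − Ω‖₂ ≤ (1/σ_min(D)²)·‖B‖₂²·‖Δ‖₂ / (1/κ(D)² − ‖B‖₂·‖Δ‖₂)`. -/
theorem omega_perturbation_bound {n k : ℕ}
    (B Bh : Matrix (Fin n) (Fin n) ℝ) (hB : B.PosDef) (hBh : Bh.PosDef)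
    (D : Matrix (Fin n) (Fin k) ℝ) (hD : 0 < sigmaMin D)
    (hsmall : ‖B‖ * ‖Bh⁻¹ - B⁻¹‖ * (sigmaMax D / sigmaMin D) ^ 2 < 1) :
    ‖(Dᴴ * Bh⁻¹ * D)⁻¹ - (Dᴴ * B⁻¹ * D)⁻¹‖ ≤
      (1 / sigmaMin D ^ 2) * (‖B‖ ^ 2 * ‖Bh⁻¹ - B⁻¹‖) /
        (1 / (sigmaMax D / sigmaMin D) ^ 2 - ‖B‖ * ‖Bh⁻¹ - B⁻¹‖) := by
  classical
  set M := Dᴴ * B⁻¹ * D with hM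
  set Mh := Dᴴ * Bh⁻¹ * D with hMh
  have hinf_pos : 0 < ⨅ i, (Matrix.isHermitian_conjTranspose_mul_self D).eigenvalues i := by
    have h := hD
    rw [sigmaMin] at h
    exact Real.sqrt_pos.mp h
  have hk : Nonempty (Fin k) := by
    by_contra h
    rw [not_nonempty_iff] at h
    rw [Real.iInf_of_isEmpty] at hinf_pos
    exact lt_irrefl 0 hinf_pos
  have hsm2 : sigmaMin D ^ 2 = ⨅ i, (Matrix.isHermitian_conjTranspose_mul_self D).eigenvalues i := by
    rw [sigmaMin]; exact Real.sq_sqrt hinf_pos.le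
  have hsup_pos : 0 < ⨆ i, (Matrix.isHermitian_conjTranspose_mul_self D).eigenvalues i := by
    refine lt_of_lt_of_le hinf_pos ?_
    exact (ciInf_le (Set.Finite.bddBelow (Set.finite_range _)) (Classical.arbitrary _)).trans
      (le_ciSup (Set.Finite.bddAbove (Set.finite_range _)) _)
  have hsM2 : sigmaMax D ^ 2 = ⨆ i, (Matrix.isHermitian_conjTranspose_mul_self D).eigenvalues i := by
    rw [sigmaMax]; exact Real.sq_sqrt hsup_pos.le
  have hsM_pos : 0 < sigmaMax D := by
    rw [sigmaMax]; exact Real.sqrt_pos.mpr hsup_pos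
  have hDlow : ∀ x : Fin k → ℝ, sigmaMin D ^ 2 * (x ⬝ᵥ x) ≤ (D *ᵥ x) ⬝ᵥ (D *ᵥ x) := by
    intro x
    rw [hsm2, ← OmegaAux.dot_DtD]
    exact (OmegaAux.rayleigh _ x).1
  have hDhigh : ∀ x : Fin k → ℝ, (D *ᵥ x) ⬝ᵥ (D *ᵥ x) ≤ sigmaMax D ^ 2 * (x ⬝ᵥ x) := by
    intro x
    rw [hsM2, ← OmegaAux.dot_DtD]
    exact (OmegaAux.rayleigh _ x).2
  have hDinj : ∀ x : Fin k → ℝ, x ≠ 0 → D *ᵥ x ≠ 0 := by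
    intro x hx h0
    have h1 := hDlow x
    rw [h0] at h1
    simp only [dotProduct_zero, zero_dotProduct] at h1
    nlinarith [OmegaAux.dot_self_pos hx, hD]
  have hBne : B ≠ 0 := by
    intro h0
    have hn : Nonempty (Fin n) := by
      by_contra h
      rw [not_nonempty_iff] at h
      have hx1 : (fun _ => (1:ℝ)) ≠ (0 : Fin k → ℝ) := by
        intro hh
        have := congrFun hh (Classical.arbitrary (Fin k))
        simpa using this
      exact hDinj _ hx1 (by ext i; exact (h.false i).elim)
    have hx1 : (fun _ => (1:ℝ)) ≠ (0 : Fin n → ℝ) := by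
      intro hh
      have := congrFun hh (Classical.arbitrary (Fin n))
      simpa using this
    have := hB.dotProduct_mulVec_pos hx1
    rw [h0] at this
    simp at this
  have hBpos : 0 < ‖B‖ := norm_pos_iff.mpr hBne
  have hMpd : M.PosDef := OmegaAux.conj_posDef hB hDinj
  have hMhpd : Mh.PosDef := OmegaAux.conj_posDef hBh hDinj
  set c : ℝ := sigmaMin D ^ 2 / ‖B‖ with hc
  have hc_pos : 0 < c := div_pos (by positivity) hBpos
  have hMcoer : ∀ x : Fin k → ℝ, c * (x ⬝ᵥ x) ≤ x ⬝ᵥ (M *ᵥ x) := by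
    intro x
    rw [hM, OmegaAux.dot_conj]
    have h1 := OmegaAux.inv_coercive hB (D *ᵥ x)
    have h2 := hDlow x
    rw [hc, div_mul_eq_mul_div, div_le_iff₀ hBpos]
    nlinarith [h1, h2]
  have haM : ‖M⁻¹‖ ≤ ‖B‖ / sigmaMin D ^ 2 := by
    have h := OmegaAux.inv_norm_le hMpd hc_pos hMcoer
    rwa [hc, one_div_div] at h
  have hDnorm : ‖D‖ ≤ sigmaMax D := by
    apply OmegaAux.opNorm_le _ hsM_pos.le
    intro v
    have hsq : ‖OmegaAux.euc (D *ᵥ v)‖ ^ 2 ≤ (sigmaMax D * ‖OmegaAux.euc v‖) ^ 2 := by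
      rw [OmegaAux.norm_euc_sq, mul_pow, OmegaAux.norm_euc_sq]
      exact hDhigh v
    exact le_of_pow_le_pow_left₀ two_ne_zero (by positivity) hsq
  have hMdet : IsUnit M.det := isUnit_iff_ne_zero.mpr hMpd.det_pos.ne'
  have hMhdet : IsUnit Mh.det := isUnit_iff_ne_zero.mpr hMhpd.det_pos.ne'
  have hdiff : Mh⁻¹ - M⁻¹ = Mh⁻¹ * (M - Mh) * M⁻¹ := by
    rw [Matrix.mul_sub, Matrix.sub_mul, Matrix.mul_assoc, Matrix.mul_nonsing_inv _ hMdet,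
      Matrix.mul_one, Matrix.nonsing_inv_mul _ hMhdet, Matrix.one_mul]
  have hMMh : M - Mh = Dᴴ * (B⁻¹ - Bh⁻¹) * D := by
    rw [hM, hMh, Matrix.mul_sub, Matrix.sub_mul]
  have hEnorm : ‖M - Mh‖ ≤ sigmaMax D ^ 2 * ‖Bh⁻¹ - B⁻¹‖ := by
    rw [hMMh]
    have hDc : ‖Dᴴ‖ = ‖D‖ := Matrix.l2_opNorm_conjTranspose D
    calc ‖Dᴴ * (B⁻¹ - Bh⁻¹) * D‖ ≤ ‖Dᴴ * (B⁻¹ - Bh⁻¹)‖ * ‖D‖ := Matrix.l2_opNorm_mul _ _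
      _ ≤ (‖Dᴴ‖ * ‖B⁻¹ - Bh⁻¹‖) * ‖D‖ :=
        mul_le_mul_of_nonneg_right (Matrix.l2_opNorm_mul _ _) (norm_nonneg _)
      _ = (‖D‖ * ‖D‖) * ‖Bh⁻¹ - B⁻¹‖ := by rw [hDc, norm_sub_rev]; ring
      _ ≤ (sigmaMax D * sigmaMax D) * ‖Bh⁻¹ - B⁻¹‖ := by
        apply mul_le_mul_of_nonneg_right _ (norm_nonneg _)
        exact mul_le_mul hDnorm hDnorm (norm_nonneg _) hsM_pos.le
      _ = sigmaMax D ^ 2 * ‖Bh⁻¹ - B⁻¹‖ := by ring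
  set X := ‖Mh⁻¹ - M⁻¹‖ with hX
  set a := ‖M⁻¹‖ with ha
  set e := ‖M - Mh‖ with he
  have hb : ‖Mh⁻¹‖ ≤ a + X := by
    calc ‖Mh⁻¹‖ = ‖M⁻¹ + (Mh⁻¹ - M⁻¹)‖ := by rw [show M⁻¹ + (Mh⁻¹ - M⁻¹) = Mh⁻¹ by abel]
      _ ≤ a + X := norm_add_le _ _
  have hXle : X ≤ (a + X) * e * a := by
    calc X = ‖Mh⁻¹ * (M - Mh) * M⁻¹‖ := by rw [hX, hdiff]
      _ ≤ ‖Mh⁻¹ * (M - Mh)‖ * a := Matrix.l2_opNorm_mul _ _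
      _ ≤ (‖Mh⁻¹‖ * e) * a :=
        mul_le_mul_of_nonneg_right (Matrix.l2_opNorm_mul _ _) (norm_nonneg _)
      _ ≤ (a + X) * e * a := by
        apply mul_le_mul_of_nonneg_right _ (norm_nonneg _)
        exact mul_le_mul_of_nonneg_right hb (norm_nonneg _)
  set σm := sigmaMin D
  set σM := sigmaMax D
  set nB := ‖B‖
  set δ := ‖Bh⁻¹ - B⁻¹‖ with hδ
  have hδ0 : 0 ≤ δ := norm_nonneg _
  have ha0 : 0 ≤ a := norm_nonneg _
  have hX0 : 0 ≤ X := norm_nonneg _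
  have he0 : 0 ≤ e := norm_nonneg _
  set t : ℝ := (nB / σm ^ 2) * (σM ^ 2 * δ) with ht
  have htval : t = nB * δ * (σM / σm) ^ 2 := by
    rw [ht]; field_simp
  have hae : a * e ≤ t := by
    rw [ht]
    exact mul_le_mul haM hEnorm he0 (by positivity)
  have ht1 : 0 < 1 - t := by rw [htval]; linarith [hsmall]
  have h4 : X * (1 - a * e) ≤ a ^ 2 * e := by nlinarith [hXle]
  have h5 : X * (1 - t) ≤ X * (1 - a * e) := by nlinarith [hae, hX0]
  have h6 : a ^ 2 * e ≤ (nB / σm ^ 2) ^ 2 * (σM ^ 2 * δ) := by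
    apply mul_le_mul (pow_le_pow_left₀ ha0 haM 2) hEnorm he0 (by positivity)
  have hfinal : X ≤ (nB / σm ^ 2) ^ 2 * (σM ^ 2 * δ) / (1 - t) := by
    rw [le_div_iff₀ ht1]
    exact (h5.trans h4).trans h6
  have hden_pos : 0 < 1 / (σM / σm) ^ 2 - nB * δ := by
    have hκ : 0 < (σM / σm) ^ 2 := by positivity
    rw [lt_sub_iff_add_lt, zero_add, lt_div_iff₀ hκ]
    linarith [hsmall]
  have heq : (1 / σm ^ 2) * (nB ^ 2 * δ) / (1 / (σM / σm) ^ 2 - nB * δ) =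
      (nB / σm ^ 2) ^ 2 * (σM ^ 2 * δ) / (1 - t) := by
    rw [htval]
    exact OmegaAux.real_algebra σm σM nB δ hD.ne' hsM_pos.ne' hden_pos.ne'
      (by rw [← htval]; exact ht1.ne')
  rw [heq]
  exact hfinal
end
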